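/- arXiv:2205.14973 — 2 statements merged into one kernel-verified Lean document; each statement's English description precedes it below -/
import Mathlib

section
/- Let g be the pp-wave metric on ℝ⁴ with smooth profile H, let m ≠ 0 be real, and let Y be a smooth vector field on ℝ⁴ with (L_Y g)_{μν} = 2ω g_{μν} for smooth ω. Let (u,v,x,y,n) : I → ℝ⁵, n > 0, be a solution of the pp-wave einbein Euler–Lagrange system, so that π_v := u̇/n is constant; assume π_v ≠ 0. With f^μ = (u/2)·∂Y^μ/∂v + (m²u²/(8π_v²))·∂²Y^μ/∂v² + (1/2)·δ^μ_v·Y^u, the conformal factor satisfies, for every λ ∈ I: n(λ)·ω(x̄(λ)) = (1/π_v²)·(d/dλ)[Σ_{μ,ν} f^μ(x̄(λ)) g_{μν}(x̄(λ)) ẋ̄^ν(λ)/n(λ)], where x̄ = (u,v,x,y); i.e. n·ω along the solution is the total λ-derivative of (1/π_v²)·f^μ p_μ with p_μ = Σ_ν g_{μν}ẋ̄^ν/n. -/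
/-- Partial derivative of a scalar function on ℝ^N in the i-th coordinate direction. -/
noncomputable def pd {N : ℕ} (f : (Fin N → ℝ) → ℝ) (i : Fin N) (x : Fin N → ℝ) : ℝ :=
  fderiv ℝ f x (Pi.single i 1)

/-- Lie derivative of a covariant 2-tensor field `T` along the vector field `V`. -/
noncomputable def lieD {N : ℕ} (V : (Fin N → ℝ) → Fin N → ℝ)
    (T : (Fin N → ℝ) → Fin N → Fin N → ℝ) (x : Fin N → ℝ) (μ ν : Fin N) : ℝ :=
  ∑ σ, (V x σ * pd (fun y => T y μ ν) σ x
    + T x σ ν * pd (fun y => V y σ) μ x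
    + T x μ σ * pd (fun y => V y σ) ν x)

/-- pp-wave metric on ℝ⁴ with coordinates (u,v,x,y) = indices (0,1,2,3) and profile H:
g_{uu} = H, g_{uv} = g_{vu} = 1, g_{xx} = g_{yy} = 1, all other components zero. -/
noncomputable def ppMetric (H : (Fin 4 → ℝ) → ℝ) (x : Fin 4 → ℝ) (μ ν : Fin 4) : ℝ :=
  if μ = 0 ∧ ν = 0 then H x
  else if (μ = 0 ∧ ν = 1) ∨ (μ = 1 ∧ ν = 0) then 1
  else if (μ = 2 ∧ ν = 2) ∨ (μ = 3 ∧ ν = 3) then 1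
  else 0

section API
variable {N : ℕ} {f g : (Fin N → ℝ) → ℝ} {i j : Fin N} {x : Fin N → ℝ}

lemma pd_const (r : ℝ) (i : Fin N) (x : Fin N → ℝ) : pd (fun _ => r) i x = 0 := by
  simp [pd]

lemma pd_smooth (hf : ContDiff ℝ (⊤ : ℕ∞) f) (i : Fin N) : ContDiff ℝ (⊤ : ℕ∞) (pd f i) := by
  have h1 : ContDiff ℝ (⊤ : ℕ∞) (fderiv ℝ f) := hf.fderiv_right (by simp)
  exact h1.clm_apply contDiff_const

lemma pd_add (hf : DifferentiableAt ℝ f x) (hg : DifferentiableAt ℝ g x) :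
    pd (fun y => f y + g y) i x = pd f i x + pd g i x := by
  simp only [pd]; rw [fderiv_fun_add hf hg]; simp

lemma pd_neg : pd (fun y => -f y) i x = -pd f i x := by
  simp [pd, fderiv_fun_neg]

lemma pd_sub (hf : DifferentiableAt ℝ f x) (hg : DifferentiableAt ℝ g x) :
    pd (fun y => f y - g y) i x = pd f i x - pd g i x := by
  simp only [pd]; rw [fderiv_fun_sub hf hg]; simp

lemma pd_mul (hf : DifferentiableAt ℝ f x) (hg : DifferentiableAt ℝ g x) :
    pd (fun y => f y * g y) i x = f x * pd g i x + pd f i x * g x := by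
  simp only [pd]; rw [fderiv_fun_mul hf hg]; simp; ring

lemma pd_const_mul (r : ℝ) (hf : DifferentiableAt ℝ f x) :
    pd (fun y => r * f y) i x = r * pd f i x := by
  simp only [pd]; rw [fderiv_const_mul hf]; simp

lemma pd_comm (hf : ContDiff ℝ (⊤ : ℕ∞) f) : pd (pd f i) j x = pd (pd f j) i x := by
  have hdf : Differentiable ℝ f := hf.differentiable (by simp)
  have hdf' : ContDiff ℝ (⊤ : ℕ∞) (fderiv ℝ f) := hf.fderiv_right (by simp)
  have key : ∀ (k : Fin N) (v : Fin N → ℝ), pd (fun y => fderiv ℝ f y v) k x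
      = fderiv ℝ (fderiv ℝ f) x (Pi.single k 1) v := by
    intro k v
    rw [pd]
    rw [show (fun y => fderiv ℝ f y v) = fun y => (fderiv ℝ f y) v from rfl,
      fderiv_clm_apply ((hdf'.differentiable (by simp)).differentiableAt) (differentiableAt_const v)]
    simp
  have h1 : pd (pd f i) j x = fderiv ℝ (fderiv ℝ f) x (Pi.single j 1) (Pi.single i 1) :=
    key j (Pi.single i 1)
  have h2 : pd (pd f j) i x = fderiv ℝ (fderiv ℝ f) x (Pi.single i 1) (Pi.single j 1) :=
    key i (Pi.single j 1)
  rw [h1, h2]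
  exact (second_derivative_symmetric (fun y => (hdf y).hasFDerivAt)
    ((hdf'.differentiable (by simp) x).hasFDerivAt) (Pi.single i 1) (Pi.single j 1)).symm

lemma pd_zero_fun (h : ∀ y, f y = 0) : pd f i x = 0 := by
  have : f = fun _ => 0 := funext h
  rw [this]; exact pd_const 0 i x

end API

lemma single_eq_smul (i : Fin 4) (r : ℝ) :
    (Pi.single i r : Fin 4 → ℝ) = r • (Pi.single i (1:ℝ) : Fin 4 → ℝ) := by
  funext j; by_cases h : j = i <;> simp [h, Pi.single_apply]

lemma hasDerivAt_comp4 {F : (Fin 4 → ℝ) → ℝ} (hF : ContDiff ℝ (⊤ : ℕ∞) F)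
    {c : ℝ → Fin 4 → ℝ} {d : Fin 4 → ℝ} {t : ℝ}
    (hc : ∀ i, HasDerivAt (fun s => c s i) (d i) t) :
    HasDerivAt (fun s => F (c s))
      (pd F 0 (c t) * d 0 + pd F 1 (c t) * d 1 + pd F 2 (c t) * d 2 + pd F 3 (c t) * d 3) t := by
  have hγ : HasDerivAt c d t := hasDerivAt_pi.2 hc
  have hFd : HasFDerivAt F (fderiv ℝ F (c t)) (c t) :=
    (hF.differentiable (by simp) (c t)).hasFDerivAt
  have h := hFd.comp_hasDerivAt t hγ
  have hval : fderiv ℝ F (c t) d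
      = pd F 0 (c t) * d 0 + pd F 1 (c t) * d 1 + pd F 2 (c t) * d 2 + pd F 3 (c t) * d 3 := by
    have hd : d = Pi.single 0 (d 0) + Pi.single 1 (d 1) + Pi.single 2 (d 2) + Pi.single 3 (d 3) := by
      funext j; fin_cases j <;> simp [Pi.single_apply]
    conv_lhs => rw [hd]
    simp only [map_add]
    rw [single_eq_smul 0, single_eq_smul 1, single_eq_smul 2, single_eq_smul 3]
    simp only [map_smul, smul_eq_mul, pd]
    ring
  rw [hval] at h
  exact h

lemma pd_indep1 {H : (Fin 4 → ℝ) → ℝ} (hH : ContDiff ℝ (⊤ : ℕ∞) H)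
    (hind : ∀ x : Fin 4 → ℝ, ∀ r : ℝ, H (Function.update x 1 r) = H x) (x : Fin 4 → ℝ) :
    pd H 1 x = 0 := by
  set v : Fin 4 → ℝ := Pi.single 1 1 with hv
  have hline : HasDerivAt (fun r : ℝ => x + r • v) v 0 := by
    simpa using ((hasDerivAt_id (0:ℝ)).smul_const v).const_add x
  have hcomp := (hH.differentiable (by simp) (x + (0:ℝ) • v)).hasFDerivAt.comp_hasDerivAt 0 hline
  have heqf : (fun r : ℝ => H (x + r • v)) = fun _ => H x := by
    funext r
    have hupd : x + r • v = Function.update x 1 (x 1 + r) := by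
      funext j; by_cases hj : j = 1 <;> simp [hv, hj, Function.update_apply, Pi.single_apply]
    rw [hupd, hind]
  have hcomp' : HasDerivAt (fun r : ℝ => H (x + r • v)) ((fderiv ℝ H (x + (0:ℝ) • v)) v) 0 := hcomp
  rw [heqf] at hcomp'
  have h0 := hcomp'.unique (hasDerivAt_const 0 (H x))
  simpa [pd, hv] using h0

set_option maxHeartbeats 4000000 in
theorem stmt7
    (H : (Fin 4 → ℝ) → ℝ)
    (hH_smooth : ContDiff ℝ (⊤ : ℕ∞) H)
    (hH_indep : ∀ x : Fin 4 → ℝ, ∀ r : ℝ, H (Function.update x 1 r) = H x)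
    (m : ℝ) (hm : m ≠ 0)
    (Y : (Fin 4 → ℝ) → Fin 4 → ℝ) (ω : (Fin 4 → ℝ) → ℝ)
    (hY_smooth : ∀ μ, ContDiff ℝ (⊤ : ℕ∞) (fun x => Y x μ))
    (hω_smooth : ContDiff ℝ (⊤ : ℕ∞) ω)
    (hCKV : ∀ x μ ν, lieD Y (ppMetric H) x μ ν = 2 * ω x * ppMetric H x μ ν)
    (a b : ℝ) (c : ℝ → Fin 4 → ℝ) (n : ℝ → ℝ)
    (hc : ∀ μ, ContDiffOn ℝ (⊤ : ℕ∞) (fun t => c t μ) (Set.Ioo a b))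
    (hn : ContDiffOn ℝ (⊤ : ℕ∞) n (Set.Ioo a b))
    (hnpos : ∀ t ∈ Set.Ioo a b, 0 < n t)
    (heq1 : ∀ t ∈ Set.Ioo a b,
      H (c t) * (deriv (fun s => c s 0) t) ^ 2
        + 2 * deriv (fun s => c s 0) t * deriv (fun s => c s 1) t
        + (deriv (fun s => c s 2) t) ^ 2 + (deriv (fun s => c s 3) t) ^ 2
        + n t ^ 2 * m ^ 2 = 0)
    (heq2 : ∀ t ∈ Set.Ioo a b,
      deriv (fun s => deriv (fun r => c r 1) s) t
        + pd H 2 (c t) * deriv (fun s => c s 2) t * deriv (fun s => c s 0) t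
        + pd H 3 (c t) * deriv (fun s => c s 3) t * deriv (fun s => c s 0) t
        + (1 / 2) * pd H 0 (c t) * (deriv (fun s => c s 0) t) ^ 2
        - deriv n t / n t * deriv (fun s => c s 1) t = 0)
    (heq3 : ∀ t ∈ Set.Ioo a b,
      deriv (fun s => deriv (fun r => c r 0) s) t
        - deriv n t / n t * deriv (fun s => c s 0) t = 0)
    (heq4 : ∀ t ∈ Set.Ioo a b,
      (deriv (fun s => deriv (fun r => c r 2) s) t
          - (1 / 2) * pd H 2 (c t) * (deriv (fun s => c s 0) t) ^ 2
          - deriv n t / n t * deriv (fun s => c s 2) t = 0)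
      ∧ (deriv (fun s => deriv (fun r => c r 3) s) t
          - (1 / 2) * pd H 3 (c t) * (deriv (fun s => c s 0) t) ^ 2
          - deriv n t / n t * deriv (fun s => c s 3) t = 0))
    -- πv is the constant value of u̇/n along the solution
    (πv : ℝ) (hπv : ∀ t ∈ Set.Ioo a b, deriv (fun s => c s 0) t / n t = πv)
    (hπv0 : πv ≠ 0)
    -- the mass-dependent distortion f of the conformal Killing vector Y
    (f : (Fin 4 → ℝ) → Fin 4 → ℝ)
    (hf : f = fun x μ => (x 0 / 2) * pd (fun y => Y y μ) 1 x
        + (m ^ 2 * (x 0) ^ 2 / (8 * πv ^ 2)) * pd (fun y => pd (fun z => Y z μ) 1 y) 1 x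
        + (1 / 2) * (if μ = 1 then Y x 0 else 0)) :
    ∀ t ∈ Set.Ioo a b,
      n t * ω (c t) = (1 / πv ^ 2) *
        deriv (fun s =>
          (∑ μ, ∑ ν, f (c s) μ * ppMetric H (c s) μ ν * deriv (fun r => c r ν) s) / n s) t := by
  -- basic smoothness
  have sY0 : ContDiff ℝ (⊤ : ℕ∞) (fun x => Y x 0) := hY_smooth 0
  have sY1 : ContDiff ℝ (⊤ : ℕ∞) (fun x => Y x 1) := hY_smooth 1
  have sY2 : ContDiff ℝ (⊤ : ℕ∞) (fun x => Y x 2) := hY_smooth 2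
  have sY3 : ContDiff ℝ (⊤ : ℕ∞) (fun x => Y x 3) := hY_smooth 3
  have dY0 : ∀ x, DifferentiableAt ℝ (fun x => Y x 0) x := fun x => (sY0.differentiable (by simp)) x
  have hH1 : ∀ x, pd H 1 x = 0 := pd_indep1 hH_smooth hH_indep
  have hH1f : pd H 1 = fun _ => (0:ℝ) := funext hH1
  have hH1' : ∀ (i : Fin 4) x, pd (pd H i) 1 x = 0 := by
    intro i x
    rw [pd_comm hH_smooth, hH1f, pd_const]
  -- CKV components
  have B11 : ∀ x, pd (fun y => Y y 0) 1 x = 0 := by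
    intro x; have h := hCKV x 1 1
    simp (config := { decide := true }) [lieD, Fin.sum_univ_four, ppMetric, pd_const] at h
    linarith
  have B11f : pd (fun y => Y y 0) 1 = fun _ => (0:ℝ) := funext B11
  have B22 : ∀ x, pd (fun y => Y y 2) 2 x = ω x := by
    intro x; have h := hCKV x 2 2
    simp (config := { decide := true }) [lieD, Fin.sum_univ_four, ppMetric, pd_const] at h
    linarith
  have B33 : ∀ x, pd (fun y => Y y 3) 3 x = ω x := by
    intro x; have h := hCKV x 3 3
    simp (config := { decide := true }) [lieD, Fin.sum_univ_four, ppMetric, pd_const] at h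
    linarith
  have B12 : ∀ x, pd (fun y => Y y 2) 1 x = -pd (fun y => Y y 0) 2 x := by
    intro x; have h := hCKV x 1 2
    simp (config := { decide := true }) [lieD, Fin.sum_univ_four, ppMetric, pd_const] at h
    linarith
  have B13 : ∀ x, pd (fun y => Y y 3) 1 x = -pd (fun y => Y y 0) 3 x := by
    intro x; have h := hCKV x 1 3
    simp (config := { decide := true }) [lieD, Fin.sum_univ_four, ppMetric, pd_const] at h
    linarith
  have B23 : ∀ x, pd (fun y => Y y 2) 3 x = -pd (fun y => Y y 3) 2 x := by
    intro x; have h := hCKV x 2 3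
    simp (config := { decide := true }) [lieD, Fin.sum_univ_four, ppMetric, pd_const] at h
    linarith
  have B01 : ∀ x, pd (fun y => Y y 1) 1 x = 2 * ω x - pd (fun y => Y y 0) 0 x := by
    intro x; have h := hCKV x 0 1
    simp (config := { decide := true }) [lieD, Fin.sum_univ_four, ppMetric, pd_const] at h
    rw [B11 x] at h
    nlinarith [h]
  have B02 : ∀ x, pd (fun y => Y y 2) 0 x
      = -(H x * pd (fun y => Y y 0) 2 x) - pd (fun y => Y y 1) 2 x := by
    intro x; have h := hCKV x 0 2
    simp (config := { decide := true }) [lieD, Fin.sum_univ_four, ppMetric, pd_const] at h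
    linarith
  have B03 : ∀ x, pd (fun y => Y y 3) 0 x
      = -(H x * pd (fun y => Y y 0) 3 x) - pd (fun y => Y y 1) 3 x := by
    intro x; have h := hCKV x 0 3
    simp (config := { decide := true }) [lieD, Fin.sum_univ_four, ppMetric, pd_const] at h
    linarith
  have B00 : ∀ x, pd (fun y => Y y 1) 0 x
      = ω x * H x - H x * pd (fun y => Y y 0) 0 x
        - (1/2) * (Y x 0 * pd H 0 x + Y x 2 * pd H 2 x + Y x 3 * pd H 3 x) := by
    intro x; have h := hCKV x 0 0
    simp (config := { decide := true }) [lieD, Fin.sum_univ_four, ppMetric, pd_const] at h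
    rw [hH1 x] at h
    nlinarith [h]

  -- function-level versions of B
  have B22f : pd (fun y => Y y 2) 2 = ω := funext B22
  have B33f : pd (fun y => Y y 3) 3 = ω := funext B33
  have B12f : pd (fun y => Y y 2) 1 = fun x => -pd (fun y => Y y 0) 2 x := funext B12
  have B13f : pd (fun y => Y y 3) 1 = fun x => -pd (fun y => Y y 0) 3 x := funext B13
  have B23f : pd (fun y => Y y 2) 3 = fun x => -pd (fun y => Y y 3) 2 x := funext B23
  have B01f : pd (fun y => Y y 1) 1 = fun x => 2 * ω x - pd (fun y => Y y 0) 0 x := funext B01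
  have B02f : pd (fun y => Y y 2) 0 = fun x => -(H x * pd (fun y => Y y 0) 2 x) - pd (fun y => Y y 1) 2 x := funext B02
  have B03f : pd (fun y => Y y 3) 0 = fun x => -(H x * pd (fun y => Y y 0) 3 x) - pd (fun y => Y y 1) 3 x := funext B03
  have B00f : pd (fun y => Y y 1) 0 = fun x => ω x * H x - H x * pd (fun y => Y y 0) 0 x
      - (1/2) * (Y x 0 * pd H 0 x + Y x 2 * pd H 2 x + Y x 3 * pd H 3 x) := funext B00
  -- differentiability helpers
  have dω : ∀ x, DifferentiableAt ℝ ω x := fun x => (hω_smooth.differentiable (by simp)) x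
  have dH : ∀ x, DifferentiableAt ℝ H x := fun x => (hH_smooth.differentiable (by simp)) x
  have da0 : ∀ x, DifferentiableAt ℝ (pd (fun y => Y y 0) 0) x :=
    fun x => ((pd_smooth sY0 0).differentiable (by simp)) x
  have da2 : ∀ x, DifferentiableAt ℝ (pd (fun y => Y y 0) 2) x :=
    fun x => ((pd_smooth sY0 2).differentiable (by simp)) x
  have da3 : ∀ x, DifferentiableAt ℝ (pd (fun y => Y y 0) 3) x :=
    fun x => ((pd_smooth sY0 3).differentiable (by simp)) x
  have dY1p2 : ∀ x, DifferentiableAt ℝ (pd (fun y => Y y 1) 2) x :=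
    fun x => ((pd_smooth sY1 2).differentiable (by simp)) x
  have dY1p3 : ∀ x, DifferentiableAt ℝ (pd (fun y => Y y 1) 3) x :=
    fun x => ((pd_smooth sY1 3).differentiable (by simp)) x
  have dH0 : ∀ x, DifferentiableAt ℝ (pd H 0) x :=
    fun x => ((pd_smooth hH_smooth 0).differentiable (by simp)) x
  have dH2 : ∀ x, DifferentiableAt ℝ (pd H 2) x :=
    fun x => ((pd_smooth hH_smooth 2).differentiable (by simp)) x
  have dH3 : ∀ x, DifferentiableAt ℝ (pd H 3) x :=
    fun x => ((pd_smooth hH_smooth 3).differentiable (by simp)) x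
  -- first-direction second derivatives vanish
  have pa0_1 : ∀ x, pd (pd (fun y => Y y 0) 0) 1 x = 0 := by
    intro x; rw [pd_comm sY0, B11f, pd_const]
  have pa2_1 : ∀ x, pd (pd (fun y => Y y 0) 2) 1 x = 0 := by
    intro x; rw [pd_comm sY0, B11f, pd_const]
  have pa3_1 : ∀ x, pd (pd (fun y => Y y 0) 3) 1 x = 0 := by
    intro x; rw [pd_comm sY0, B11f, pd_const]
  -- I2a / I2b
  have pa2_2 : ∀ x, pd (pd (fun y => Y y 0) 2) 2 x = -pd ω 1 x := by
    intro x
    have h1 : pd (pd (fun y => Y y 2) 1) 2 x = pd (pd (fun y => Y y 2) 2) 1 x := pd_comm sY2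
    rw [B22f, B12f, pd_neg] at h1
    linarith
  have pa3_3 : ∀ x, pd (pd (fun y => Y y 0) 3) 3 x = -pd ω 1 x := by
    intro x
    have h1 : pd (pd (fun y => Y y 3) 1) 3 x = pd (pd (fun y => Y y 3) 3) 1 x := pd_comm sY3
    rw [B33f, B13f, pd_neg] at h1
    linarith
  -- I2c
  have pa2_3 : ∀ x, pd (pd (fun y => Y y 0) 2) 3 x = 0 := by
    intro x
    have h1 : pd (pd (fun y => Y y 2) 1) 3 x = pd (pd (fun y => Y y 2) 3) 1 x := pd_comm sY2
    rw [B12f, B23f, pd_neg, pd_neg] at h1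
    have h2 : pd (pd (fun y => Y y 3) 2) 1 x = pd (pd (fun y => Y y 3) 1) 2 x := pd_comm sY3
    rw [B13f, pd_neg] at h2
    have h3 : pd (pd (fun y => Y y 0) 3) 2 x = pd (pd (fun y => Y y 0) 2) 3 x := pd_comm sY0
    linarith
  have pa3_2 : ∀ x, pd (pd (fun y => Y y 0) 3) 2 x = 0 := by
    intro x; rw [pd_comm sY0]; exact pa2_3 x
  -- I2d / I2e
  have pa0_2 : ∀ x, pd (pd (fun y => Y y 0) 0) 2 x = pd ω 2 x := by
    intro x
    have h1 : pd (pd (fun y => Y y 2) 0) 1 x = pd (pd (fun y => Y y 2) 1) 0 x := pd_comm sY2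
    rw [B12f, pd_neg, B02f] at h1
    have h2 : pd (fun x => -(H x * pd (fun y => Y y 0) 2 x) - pd (fun y => Y y 1) 2 x) 1 x
        = -(H x * pd (pd (fun y => Y y 0) 2) 1 x + pd H 1 x * pd (fun y => Y y 0) 2 x) - pd (pd (fun y => Y y 1) 2) 1 x := by
      rw [pd_sub ((dH x).fun_mul (da2 x)).fun_neg (dY1p2 x), pd_neg, pd_mul (dH x) (da2 x)]
    rw [h2, pa2_1 x, hH1 x] at h1
    have h3 : pd (pd (fun y => Y y 1) 2) 1 x = pd (pd (fun y => Y y 1) 1) 2 x := pd_comm sY1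
    have h4 : pd (fun x => 2 * ω x - pd (fun y => Y y 0) 0 x) 2 x = 2 * pd ω 2 x - pd (pd (fun y => Y y 0) 0) 2 x := by
      rw [pd_sub ((dω x).const_mul 2) (da0 x), pd_const_mul 2 (dω x)]
    rw [B01f, h4] at h3
    have h5 : pd (pd (fun y => Y y 0) 2) 0 x = pd (pd (fun y => Y y 0) 0) 2 x := pd_comm sY0
    linarith
  have pa0_3 : ∀ x, pd (pd (fun y => Y y 0) 0) 3 x = pd ω 3 x := by
    intro x
    have h1 : pd (pd (fun y => Y y 3) 0) 1 x = pd (pd (fun y => Y y 3) 1) 0 x := pd_comm sY3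
    rw [B13f, pd_neg, B03f] at h1
    have h2 : pd (fun x => -(H x * pd (fun y => Y y 0) 3 x) - pd (fun y => Y y 1) 3 x) 1 x
        = -(H x * pd (pd (fun y => Y y 0) 3) 1 x + pd H 1 x * pd (fun y => Y y 0) 3 x) - pd (pd (fun y => Y y 1) 3) 1 x := by
      rw [pd_sub ((dH x).fun_mul (da3 x)).fun_neg (dY1p3 x), pd_neg, pd_mul (dH x) (da3 x)]
    rw [h2, pa3_1 x, hH1 x] at h1
    have h3 : pd (pd (fun y => Y y 1) 3) 1 x = pd (pd (fun y => Y y 1) 1) 3 x := pd_comm sY1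
    have h4 : pd (fun x => 2 * ω x - pd (fun y => Y y 0) 0 x) 3 x = 2 * pd ω 3 x - pd (pd (fun y => Y y 0) 0) 3 x := by
      rw [pd_sub ((dω x).const_mul 2) (da0 x), pd_const_mul 2 (dω x)]
    rw [B01f, h4] at h3
    have h5 : pd (pd (fun y => Y y 0) 3) 0 x = pd (pd (fun y => Y y 0) 0) 3 x := pd_comm sY0
    linarith
  have pa2_0 : ∀ x, pd (pd (fun y => Y y 0) 2) 0 x = pd ω 2 x := by
    intro x; rw [pd_comm sY0]; exact pa0_2 x
  have pa3_0 : ∀ x, pd (pd (fun y => Y y 0) 3) 0 x = pd ω 3 x := by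
    intro x; rw [pd_comm sY0]; exact pa0_3 x

  have dY2 : ∀ x, DifferentiableAt ℝ (fun x => Y x 2) x := fun x => (sY2.differentiable (by simp)) x
  have dY3 : ∀ x, DifferentiableAt ℝ (fun x => Y x 3) x := fun x => (sY3.differentiable (by simp)) x
  -- I2f
  have pa0_0 : ∀ x, pd (pd (fun y => Y y 0) 0) 0 x = 2 * pd ω 0 x - H x * pd ω 1 x
      - (1/2) * (pd H 2 x * pd (fun y => Y y 0) 2 x + pd H 3 x * pd (fun y => Y y 0) 3 x) := by
    intro x
    have h1 : pd (pd (fun y => Y y 1) 0) 1 x = pd (pd (fun y => Y y 1) 1) 0 x := pd_comm sY1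
    have hR : pd (pd (fun y => Y y 1) 1) 0 x = 2 * pd ω 0 x - pd (pd (fun y => Y y 0) 0) 0 x := by
      rw [B01f, pd_sub ((dω x).const_mul 2) (da0 x), pd_const_mul 2 (dω x)]
    have hL : pd (pd (fun y => Y y 1) 0) 1 x
        = pd ω 1 x * H x + (pd (fun y => Y y 0) 2 x * pd H 2 x + pd (fun y => Y y 0) 3 x * pd H 3 x) / 2 := by
      rw [B00f,
        pd_sub (((dω x).fun_mul (dH x)).fun_sub ((dH x).fun_mul (da0 x)))
          (((((dY0 x).fun_mul (dH0 x)).fun_add ((dY2 x).fun_mul (dH2 x))).fun_add ((dY3 x).fun_mul (dH3 x))).const_mul (1/2)),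
        pd_sub ((dω x).fun_mul (dH x)) ((dH x).fun_mul (da0 x)),
        pd_mul (dω x) (dH x), pd_mul (dH x) (da0 x),
        pd_const_mul (1/2) ((((dY0 x).fun_mul (dH0 x)).fun_add ((dY2 x).fun_mul (dH2 x))).fun_add ((dY3 x).fun_mul (dH3 x))),
        pd_add (((dY0 x).fun_mul (dH0 x)).fun_add ((dY2 x).fun_mul (dH2 x))) ((dY3 x).fun_mul (dH3 x)),
        pd_add ((dY0 x).fun_mul (dH0 x)) ((dY2 x).fun_mul (dH2 x)),
        pd_mul (dY0 x) (dH0 x), pd_mul (dY2 x) (dH2 x), pd_mul (dY3 x) (dH3 x),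
        hH1 x, hH1' 0 x, hH1' 2 x, hH1' 3 x, B11 x, B12 x, B13 x, pa0_1 x]
      ring
    rw [hL, hR] at h1
    linear_combination h1
  -- function level versions
  have pa2_1f : pd (pd (fun y => Y y 0) 2) 1 = fun _ => (0:ℝ) := funext pa2_1
  have pa3_1f : pd (pd (fun y => Y y 0) 3) 1 = fun _ => (0:ℝ) := funext pa3_1
  have pa0_1f : pd (pd (fun y => Y y 0) 0) 1 = fun _ => (0:ℝ) := funext pa0_1
  have pa2_2f : pd (pd (fun y => Y y 0) 2) 2 = fun x => -pd ω 1 x := funext pa2_2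
  have pa3_3f : pd (pd (fun y => Y y 0) 3) 3 = fun x => -pd ω 1 x := funext pa3_3
  have pa2_3f : pd (pd (fun y => Y y 0) 2) 3 = fun _ => (0:ℝ) := funext pa2_3
  have pa3_2f : pd (pd (fun y => Y y 0) 3) 2 = fun _ => (0:ℝ) := funext pa3_2
  have pa0_0f : pd (pd (fun y => Y y 0) 0) 0 = fun x => 2 * pd ω 0 x - H x * pd ω 1 x
      - (1/2) * (pd H 2 x * pd (fun y => Y y 0) 2 x + pd H 3 x * pd (fun y => Y y 0) 3 x) := funext pa0_0
  -- second derivatives of ω in direction 1 vanish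
  have W11 : ∀ x, pd (pd ω 1) 1 x = 0 := by
    intro x
    have h1 : pd (pd (pd (fun y => Y y 0) 2) 2) 1 x = pd (pd (pd (fun y => Y y 0) 2) 1) 2 x := pd_comm (pd_smooth sY0 2)
    rw [pa2_2f, pa2_1f, pd_neg, pd_const] at h1
    linarith
  have W13 : ∀ x, pd (pd ω 1) 3 x = 0 := by
    intro x
    have h1 : pd (pd (pd (fun y => Y y 0) 2) 2) 3 x = pd (pd (pd (fun y => Y y 0) 2) 3) 2 x := pd_comm (pd_smooth sY0 2)
    rw [pa2_2f, pa2_3f, pd_neg, pd_const] at h1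
    linarith
  have W12 : ∀ x, pd (pd ω 1) 2 x = 0 := by
    intro x
    have h1 : pd (pd (pd (fun y => Y y 0) 3) 3) 2 x = pd (pd (pd (fun y => Y y 0) 3) 2) 3 x := pd_comm (pd_smooth sY0 3)
    rw [pa3_3f, pa3_2f, pd_neg, pd_const] at h1
    linarith
  have dω1 : ∀ x, DifferentiableAt ℝ (pd ω 1) x :=
    fun x => ((pd_smooth hω_smooth 1).differentiable (by simp)) x
  have dω0 : ∀ x, DifferentiableAt ℝ (pd ω 0) x :=
    fun x => ((pd_smooth hω_smooth 0).differentiable (by simp)) x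
  have W10 : ∀ x, pd (pd ω 1) 0 x = 0 := by
    intro x
    have h1 : pd (pd (pd (fun y => Y y 0) 0) 0) 1 x = pd (pd (pd (fun y => Y y 0) 0) 1) 0 x := pd_comm (pd_smooth sY0 0)
    rw [pa0_0f, pa0_1f, pd_const] at h1
    have hL : pd (fun x => 2 * pd ω 0 x - H x * pd ω 1 x
        - (1/2) * (pd H 2 x * pd (fun y => Y y 0) 2 x + pd H 3 x * pd (fun y => Y y 0) 3 x)) 1 x
        = 2 * pd (pd ω 0) 1 x := by
      rw [pd_sub (((dω0 x).const_mul 2).fun_sub ((dH x).fun_mul (dω1 x)))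
            ((((dH2 x).fun_mul (da2 x)).fun_add ((dH3 x).fun_mul (da3 x))).const_mul (1/2)),
          pd_sub ((dω0 x).const_mul 2) ((dH x).fun_mul (dω1 x)),
          pd_const_mul 2 (dω0 x), pd_mul (dH x) (dω1 x),
          pd_const_mul (1/2) (((dH2 x).fun_mul (da2 x)).fun_add ((dH3 x).fun_mul (da3 x))),
          pd_add ((dH2 x).fun_mul (da2 x)) ((dH3 x).fun_mul (da3 x)),
          pd_mul (dH2 x) (da2 x), pd_mul (dH3 x) (da3 x),
          hH1 x, hH1' 2 x, hH1' 3 x, pa2_1 x, pa3_1 x, W11 x]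
      ring
    rw [hL] at h1
    rw [pd_comm hω_smooth]
    linarith
  -- second pure-v derivatives of Y components
  have P20 : ∀ x, pd (pd (fun y => Y y 0) 1) 1 x = 0 := by
    intro x; rw [B11f, pd_const]
  have P21 : ∀ x, pd (pd (fun y => Y y 1) 1) 1 x = 2 * pd ω 1 x := by
    intro x
    rw [B01f, pd_sub ((dω x).const_mul 2) (da0 x), pd_const_mul 2 (dω x), pa0_1 x]
    ring
  have P22 : ∀ x, pd (pd (fun y => Y y 2) 1) 1 x = 0 := by
    intro x; rw [B12f, pd_neg, pa2_1 x, neg_zero]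
  have P23 : ∀ x, pd (pd (fun y => Y y 3) 1) 1 x = 0 := by
    intro x; rw [B13f, pd_neg, pa3_1 x, neg_zero]
  -- components of f
  have hf0 : ∀ x, f x 0 = 0 := by
    intro x
    simp only [hf]
    rw [B11 x, P20 x]
    norm_num
  have hf1 : ∀ x, f x 1 = (x 0 / 2) * (2 * ω x - pd (fun y => Y y 0) 0 x)
      + m ^ 2 * (x 0) ^ 2 / (8 * πv ^ 2) * (2 * pd ω 1 x) + 1 / 2 * Y x 0 := by
    intro x
    simp only [hf]
    rw [B01 x, P21 x]
    norm_num
  have hf2 : ∀ x, f x 2 = -((x 0 / 2) * pd (fun y => Y y 0) 2 x) := by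
    intro x
    simp only [hf]
    rw [B12 x, P22 x]
    simp (config := { decide := true })
  have hf3 : ∀ x, f x 3 = -((x 0 / 2) * pd (fun y => Y y 0) 3 x) := by
    intro x
    simp only [hf]
    rw [B13 x, P23 x]
    simp (config := { decide := true })

  -- now the curve computation
  intro t ht
  have htI : t ∈ Set.Ioo a b := ht
  have hIoo : Set.Ioo a b ∈ nhds t := isOpen_Ioo.mem_nhds htI
  have hnt : n t ≠ 0 := ne_of_gt (hnpos t htI)
  have hdC : ∀ i : Fin 4, HasDerivAt (fun s => c s i) (deriv (fun s => c s i) t) t := by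
    intro i
    exact (((hc i).differentiableOn (by simp)).differentiableAt hIoo).hasDerivAt
  have hdn : HasDerivAt n (deriv n t) t :=
    ((hn.differentiableOn (by simp)).differentiableAt hIoo).hasDerivAt
  have hdc2' : HasDerivAt (fun s => deriv (fun r => c r 2) s)
      (deriv (fun s => deriv (fun r => c r 2) s) t) t := by
    have h2 : ContDiffOn ℝ (⊤ : ℕ∞) (deriv (fun s => c s 2)) (Set.Ioo a b) :=
      (hc 2).deriv_of_isOpen isOpen_Ioo (by simp)
    exact ((h2.differentiableOn (by simp)).differentiableAt hIoo).hasDerivAt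
  have hdc3' : HasDerivAt (fun s => deriv (fun r => c r 3) s)
      (deriv (fun s => deriv (fun r => c r 3) s) t) t := by
    have h3 : ContDiffOn ℝ (⊤ : ℕ∞) (deriv (fun s => c s 3)) (Set.Ioo a b) :=
      (hc 3).deriv_of_isOpen isOpen_Ioo (by simp)
    exact ((h3.differentiableOn (by simp)).differentiableAt hIoo).hasDerivAt
  have hEE : (fun s => (∑ μ, ∑ ν, f (c s) μ * ppMetric H (c s) μ ν * deriv (fun r => c r ν) s) / n s)
      =ᶠ[nhds t] (fun s =>
        πv * ((c s 0 / 2) * (2 * ω (c s) - pd (fun y => Y y 0) 0 (c s))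
          + m ^ 2 * (c s 0) ^ 2 / (8 * πv ^ 2) * (2 * pd ω 1 (c s)) + 1 / 2 * Y (c s) 0)
        + (-((c s 0 / 2) * pd (fun y => Y y 0) 2 (c s)) * deriv (fun r => c r 2) s
          + -((c s 0 / 2) * pd (fun y => Y y 0) 3 (c s)) * deriv (fun r => c r 3) s) / n s) := by
    filter_upwards [hIoo] with s hs
    have hns : n s ≠ 0 := ne_of_gt (hnpos s hs)
    have hc0s : deriv (fun r => c r 0) s = πv * n s := (div_eq_iff hns).mp (hπv s hs)
    simp (config := { decide := true }) only [Fin.sum_univ_four, ppMetric, hf0, hf1, hf2, hf3,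
      if_true, if_false, mul_zero, zero_mul, mul_one, one_mul, add_zero, zero_add]
    rw [hc0s]
    field_simp
    ring
  rw [hEE.deriv_eq]
  have hωc := hasDerivAt_comp4 hω_smooth hdC
  have ha0c := hasDerivAt_comp4 (pd_smooth sY0 0) hdC
  have ha2c := hasDerivAt_comp4 (pd_smooth sY0 2) hdC
  have ha3c := hasDerivAt_comp4 (pd_smooth sY0 3) hdC
  have hw1c := hasDerivAt_comp4 (pd_smooth hω_smooth 1) hdC
  have hY0c := hasDerivAt_comp4 sY0 hdC
  have hG1 := ((hdC 0).div_const 2).fun_mul ((hωc.const_mul 2).fun_sub ha0c)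
  have hG2 := ((((hdC 0).fun_pow 2).const_mul (m ^ 2)).div_const (8 * πv ^ 2)).fun_mul (hw1c.const_mul 2)
  have hG3 := hY0c.const_mul (1/2)
  have hW1 := ((((hdC 0).div_const 2).fun_mul ha2c).fun_neg).fun_mul hdc2'
  have hW2 := ((((hdC 0).div_const 2).fun_mul ha3c).fun_neg).fun_mul hdc3'
  have hder := (((hG1.fun_add hG2).fun_add hG3).const_mul πv).fun_add ((hW1.fun_add hW2).fun_div hdn hnt)
  rw [hder.deriv]
  simp only [B11, pa0_0, pa0_1, pa0_2, pa0_3, pa2_0, pa2_1, pa2_2, pa2_3, pa3_0, pa3_1, pa3_2,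
    pa3_3, W10, W11, W12, W13]
  have hc0t : deriv (fun s => c s 0) t = πv * n t := (div_eq_iff hnt).mp (hπv t htI)
  have hdd2 : deriv (fun s => deriv (fun r => c r 2) s) t
      = 1/2 * pd H 2 (c t) * (πv * n t) ^ 2 + deriv n t / n t * deriv (fun s => c s 2) t := by
    have h4 := (heq4 t htI).1
    rw [hc0t] at h4
    linarith
  have hdd3 : deriv (fun s => deriv (fun r => c r 3) s) t
      = 1/2 * pd H 3 (c t) * (πv * n t) ^ 2 + deriv n t / n t * deriv (fun s => c s 3) t := by
    have h4 := (heq4 t htI).2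
    rw [hc0t] at h4
    linarith
  rw [hc0t, hdd2, hdd3]
  have h1' := heq1 t htI
  rw [hc0t] at h1'
  field_simp
  linear_combination (-(16:ℝ) * c t 0 * pd ω 1 (c t) * πv * n t) * h1'
end

section
/- Let l ∈ ℝ and let n, t, x, y, z : I → ℝ be smooth on an open interval I with n > 0, ṫ > 0 and ẋ² + ẏ² + ż² > 0 on I, satisfying the de Sitter geodesic equations: ẗ = ṅṫ/n − (l/2)e^{lt}(ẋ² + ẏ² + ż²) and ẍ = ẋ(ṅ − n l ṫ)/n, ÿ = ẏ(ṅ − n l ṫ)/n, z̈ = ż(ṅ − n l ṫ)/n. Then the function λ ↦ −e^{lt(λ)/2}·ṫ(λ) / (n(λ)·√(e^{−lt(λ)}ṫ(λ)²/(ẋ(λ)² + ẏ(λ)² + ż(λ)²))) is constant on I. -/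
open Real Set

/-- Algebraic simplification of the conserved quantity. -/
lemma stmt11_aux (l T T' N S : ℝ) (hN : 0 < N) (hT' : 0 < T') (hS : 0 < S) :
    -(Real.exp (l * T / 2) * T') / (N * Real.sqrt (Real.exp (-(l * T)) * T' ^ 2 / S))
      = -Real.sqrt (Real.exp (2 * l * T) * S / N ^ 2) := by
  have h1 : Real.exp (-(l * T)) * T' ^ 2 / S
      = (T' / (Real.exp (l * T / 2) * Real.sqrt S)) ^ 2 := by
    rw [div_pow, mul_pow, Real.sq_sqrt hS.le, ← Real.exp_nat_mul]
    rw [Real.exp_neg]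
    push_cast
    rw [show (2:ℝ) * (l * T / 2) = l * T by ring]
    field_simp
  have h2 : Real.exp (2 * l * T) * S / N ^ 2
      = (Real.exp (l * T) * Real.sqrt S / N) ^ 2 := by
    rw [div_pow, mul_pow, Real.sq_sqrt hS.le, ← Real.exp_nat_mul]
    push_cast
    ring_nf
  rw [h1, h2, Real.sqrt_sq (by positivity), Real.sqrt_sq (by positivity)]
  have hsS : 0 < Real.sqrt S := Real.sqrt_pos.2 hS
  have he : Real.exp (l * T / 2) * Real.exp (l * T / 2) = Real.exp (l * T) := by
    rw [← Real.exp_add]; ring_nf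
  field_simp
  rw [← he]
  ring

theorem stmt11 (l : ℝ) (a b : ℝ) (n t x y z : ℝ → ℝ)
    (hn_smooth : ContDiffOn ℝ (⊤ : ℕ∞) n (Set.Ioo a b))
    (ht_smooth : ContDiffOn ℝ (⊤ : ℕ∞) t (Set.Ioo a b))
    (hx_smooth : ContDiffOn ℝ (⊤ : ℕ∞) x (Set.Ioo a b))
    (hy_smooth : ContDiffOn ℝ (⊤ : ℕ∞) y (Set.Ioo a b))
    (hz_smooth : ContDiffOn ℝ (⊤ : ℕ∞) z (Set.Ioo a b))
    (hnpos : ∀ lam ∈ Set.Ioo a b, 0 < n lam)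
    (htdpos : ∀ lam ∈ Set.Ioo a b, 0 < deriv t lam)
    (hspd : ∀ lam ∈ Set.Ioo a b,
      0 < (deriv x lam) ^ 2 + (deriv y lam) ^ 2 + (deriv z lam) ^ 2)
    -- the de Sitter geodesic equations
    (heqt : ∀ lam ∈ Set.Ioo a b,
      deriv (deriv t) lam = deriv n lam * deriv t lam / n lam
        - (l / 2) * Real.exp (l * t lam)
          * ((deriv x lam) ^ 2 + (deriv y lam) ^ 2 + (deriv z lam) ^ 2))
    (heqx : ∀ lam ∈ Set.Ioo a b,
      deriv (deriv x) lam = deriv x lam * (deriv n lam - n lam * l * deriv t lam) / n lam)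
    (heqy : ∀ lam ∈ Set.Ioo a b,
      deriv (deriv y) lam = deriv y lam * (deriv n lam - n lam * l * deriv t lam) / n lam)
    (heqz : ∀ lam ∈ Set.Ioo a b,
      deriv (deriv z) lam = deriv z lam * (deriv n lam - n lam * l * deriv t lam) / n lam) :
    ∀ lam₁ ∈ Set.Ioo a b, ∀ lam₂ ∈ Set.Ioo a b,
      -(Real.exp (l * t lam₁ / 2) * deriv t lam₁)
          / (n lam₁ * Real.sqrt (Real.exp (-(l * t lam₁)) * (deriv t lam₁) ^ 2
              / ((deriv x lam₁) ^ 2 + (deriv y lam₁) ^ 2 + (deriv z lam₁) ^ 2)))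
      = -(Real.exp (l * t lam₂ / 2) * deriv t lam₂)
          / (n lam₂ * Real.sqrt (Real.exp (-(l * t lam₂)) * (deriv t lam₂) ^ 2
              / ((deriv x lam₂) ^ 2 + (deriv y lam₂) ^ 2 + (deriv z lam₂) ^ 2))) := by
  set I := Set.Ioo a b with hI
  have hIopen : IsOpen I := isOpen_Ioo
  -- the conserved quantity
  set G : ℝ → ℝ := fun lam => Real.exp (2 * l * t lam)
      * ((deriv x lam) ^ 2 + (deriv y lam) ^ 2 + (deriv z lam) ^ 2) / (n lam) ^ 2 with hG
  have hderiv : ∀ lam ∈ I, HasDerivAt G 0 lam := by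
    intro lam hlam
    have hnhds : I ∈ nhds lam := hIopen.mem_nhds hlam
    have hn0 : n lam ≠ 0 := (hnpos lam hlam).ne'
    have hDt : HasDerivAt t (deriv t lam) lam :=
      (((ht_smooth.contDiffAt hnhds).differentiableAt (by simp))).hasDerivAt
    have hDn : HasDerivAt n (deriv n lam) lam :=
      (((hn_smooth.contDiffAt hnhds).differentiableAt (by simp))).hasDerivAt
    have hDx' : HasDerivAt (deriv x) (deriv (deriv x) lam) lam :=
      ((((hx_smooth.deriv_of_isOpen (m := 1) hIopen (by exact WithTop.coe_le_coe.2 le_top)).contDiffAt hnhds).differentiableAt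
        (by simp))).hasDerivAt
    have hDy' : HasDerivAt (deriv y) (deriv (deriv y) lam) lam :=
      ((((hy_smooth.deriv_of_isOpen (m := 1) hIopen (by exact WithTop.coe_le_coe.2 le_top)).contDiffAt hnhds).differentiableAt
        (by simp))).hasDerivAt
    have hDz' : HasDerivAt (deriv z) (deriv (deriv z) lam) lam :=
      ((((hz_smooth.deriv_of_isOpen (m := 1) hIopen (by exact WithTop.coe_le_coe.2 le_top)).contDiffAt hnhds).differentiableAt
        (by simp))).hasDerivAt
    have hE : HasDerivAt (fun s => Real.exp (2 * l * t s))
        (Real.exp (2 * l * t lam) * (2 * l * deriv t lam)) lam := by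
      have := (hDt.const_mul (2 * l)).exp
      simpa [mul_comm, mul_assoc] using this
    have hSd : HasDerivAt (fun s => (deriv x s) ^ 2 + (deriv y s) ^ 2 + (deriv z s) ^ 2)
        (2 * deriv x lam * deriv (deriv x) lam + 2 * deriv y lam * deriv (deriv y) lam
          + 2 * deriv z lam * deriv (deriv z) lam) lam := by
      have hx2 := hDx'.fun_pow 2
      have hy2 := hDy'.fun_pow 2
      have hz2 := hDz'.fun_pow 2
      have := (hx2.fun_add hy2).fun_add hz2
      simpa [pow_one, mul_comm, mul_assoc] using this
    have hnum : HasDerivAt (fun s => Real.exp (2 * l * t s)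
        * ((deriv x s) ^ 2 + (deriv y s) ^ 2 + (deriv z s) ^ 2))
        (Real.exp (2 * l * t lam) * (2 * l * deriv t lam)
            * ((deriv x lam) ^ 2 + (deriv y lam) ^ 2 + (deriv z lam) ^ 2)
          + Real.exp (2 * l * t lam)
            * (2 * deriv x lam * deriv (deriv x) lam + 2 * deriv y lam * deriv (deriv y) lam
              + 2 * deriv z lam * deriv (deriv z) lam)) lam := hE.mul hSd
    have hden : HasDerivAt (fun s => (n s) ^ 2) (2 * n lam * deriv n lam) lam := by
      have := hDn.fun_pow 2
      simpa [pow_one, mul_comm, mul_assoc] using this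
    have hfull := hnum.fun_div hden (by positivity)
    refine hfull.congr_deriv ?_
    rw [heqx lam hlam, heqy lam hlam, heqz lam hlam]
    field_simp
    ring
  have hconst : ∀ p ∈ I, ∀ q ∈ I, G p = G q := by
    intro p hp q hq
    refine (convex_Ioo a b).is_const_of_fderivWithin_eq_zero
      (fun s hs => ((hderiv s hs).differentiableAt.differentiableWithinAt)) ?_ hp hq
    intro s hs
    have h1 : fderivWithin ℝ G I s = fderiv ℝ G s :=
      fderivWithin_of_isOpen hIopen hs
    rw [h1]
    refine ContinuousLinearMap.ext_ring ?_
    simp [fderiv_apply_one_eq_deriv, (hderiv s hs).deriv]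
  intro lam₁ h1 lam₂ h2
  rw [stmt11_aux l (t lam₁) (deriv t lam₁) (n lam₁) _ (hnpos _ h1) (htdpos _ h1) (hspd _ h1),
      stmt11_aux l (t lam₂) (deriv t lam₂) (n lam₂) _ (hnpos _ h2) (htdpos _ h2) (hspd _ h2)]
  exact congrArg (fun r => -Real.sqrt r) (hconst lam₁ h1 lam₂ h2)
end
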